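/- arXiv:2405.13387 — 2 statements merged into one kernel-verified Lean document; each statement's English description precedes it below -/
import Mathlib

section
/- Let ν be a compactly supported Borel probability measure on ℝ^d whose Lebesgue decomposition has a nonzero absolutely continuous part with respect to Lebesgue measure. Then the n-th quantization error of order r = −d satisfies e_{n,−d}(ν) = 0 for every n ∈ ℕ. -/
open MeasureTheory Filter Set Metric
open scoped ENNReal NNReal Topology Classical

noncomputable section

/-- `ℝ^d`, modelled as `Fin d → ℝ` and carrying the maximum norm. -/
abbrev Ed (d : ℕ) := Fin d → ℝ

/-- The half-open unit cube `𝒬 = (0,1]^d`. -/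
def Qcube (d : ℕ) : Set (Ed d) := {x | ∀ i, x i ∈ Set.Ioc (0:ℝ) 1}

/-- The half-open dyadic cube of generation `n` with index `k ∈ ℤ^d`. -/
def dyadicCube (d n : ℕ) (k : Fin d → ℤ) : Set (Ed d) :=
  {x | ∀ i, x i ∈ Set.Ioc ((k i : ℝ) / 2 ^ n) (((k i : ℝ) + 1) / 2 ^ n)}

/-- The family `𝒟_n` of dyadic cubes of generation `n`, forming a partition of `𝒬`. -/
def Dn (d n : ℕ) : Set (Set (Ed d)) :=
  {S | ∃ k : Fin d → ℤ, (∀ i, 0 ≤ k i ∧ k i < 2 ^ n) ∧ S = dyadicCube d n k}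

/-- All dyadic cubes `𝒟 = ⋃_n 𝒟_n` (inside `𝒬`). -/
def Ddy (d : ℕ) : Set (Set (Ed d)) := ⋃ n, Dn d n

/-- All dyadic cubes of generation `n` in `ℝ^d`. -/
def DnAll (d n : ℕ) : Set (Set (Ed d)) := {S | ∃ k : Fin d → ℤ, S = dyadicCube d n k}

/-- Index set enumerating the cubes of `𝒟_n`. -/
def idx (d n : ℕ) : Finset (Fin d → ℤ) :=
  Fintype.piFinset fun _ => Finset.Icc 0 (2 ^ n - 1)

/-- Lebesgue measure restricted to `𝒬`. -/
def Lam (d : ℕ) : Measure (Ed d) := volume.restrict (Qcube d)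

/-- `dim_∞(ν) = liminf_n max_{Q ∈ 𝒟_n} log ν(Q) / log 2^{-n}`. -/
def dimInfty (d : ℕ) (ν : Measure (Ed d)) : ℝ :=
  liminf (fun n : ℕ =>
    (⨆ k ∈ idx d n, Real.log (ν (dyadicCube d n k)).toReal) / (-(n : ℝ) * Real.log 2)) atTop

/-- The set function `J_{ν,r}(Q) = max_{Q' ∈ 𝒟(Q)} ν(Q') Λ(Q')^{r/d}`. -/
def Jf (d : ℕ) (ν : Measure (Ed d)) (r : ℝ) (Q : Set (Ed d)) : ℝ :=
  sSup {v : ℝ | ∃ Q' ∈ Ddy d, Q' ⊆ Q ∧ v = (ν Q').toReal * (Lam d Q').toReal ^ (r / (d:ℝ))}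

/-- The `n`-th level `J`-partition sum exponent `τ_{J,n}(q)`. -/
def tauN (d : ℕ) (ν : Measure (Ed d)) (r q : ℝ) (n : ℕ) : ℝ :=
  Real.log (∑ k ∈ (idx d n).filter (fun k => 0 < Jf d ν r (dyadicCube d n k)),
    Jf d ν r (dyadicCube d n k) ^ q) / ((n : ℝ) * Real.log 2)

/-- The `J`-partition function `τ_{J_{ν,r}}(q)`. -/
def tauJ (d : ℕ) (ν : Measure (Ed d)) (r q : ℝ) : ℝ :=
  limsup (tauN d ν r q) atTop

/-- The critical value `q_r = inf{q > 0 : τ_{J_{ν,r}}(q) < 0}`. -/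
def qrCrit (d : ℕ) (ν : Measure (Ed d)) (r : ℝ) : ℝ :=
  sInf {q : ℝ | 0 < q ∧ tauJ d ν r q < 0}

/-- The `n`-th level `L^q`-sum exponent `β_{ν,n}(q)`. -/
def betaN (d : ℕ) (ν : Measure (Ed d)) (q : ℝ) (n : ℕ) : ℝ :=
  Real.log (∑ k ∈ (idx d n).filter (fun k => 0 < ν (dyadicCube d n k)),
    ((ν (dyadicCube d n k)).toReal) ^ q) / ((n : ℝ) * Real.log 2)

/-- The `L^q`-spectrum `β_ν(q)`. -/
def betaNu (d : ℕ) (ν : Measure (Ed d)) (q : ℝ) : ℝ := limsup (betaN d ν q) atTop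

/-- Upper Minkowski (box-counting) dimension of the support of `ν`, computed through the
number of dyadic cubes of positive measure. -/
def dimMUpper (d : ℕ) (ν : Measure (Ed d)) : ℝ :=
  limsup (fun n : ℕ =>
    Real.log (((idx d n).filter fun k => 0 < ν (dyadicCube d n k)).card) /
      ((n : ℝ) * Real.log 2)) atTop

/-- `log⁺`. -/
def logPlus (x : ℝ) : ℝ := Real.log (max x 1)

/-- `N_{ν,α,r}(n) = card{Q ∈ 𝒟_n : J_{ν,r}(Q) ≥ 2^{-αn}}`. -/
def Ncount (d : ℕ) (ν : Measure (Ed d)) (α r : ℝ) (n : ℕ) : ℕ :=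
  ((idx d n).filter fun k => (2:ℝ) ^ (-(α * (n:ℝ))) ≤ Jf d ν r (dyadicCube d n k)).card

/-- `F̄_{ν,r}(α)`. -/
def FUpperAt (d : ℕ) (ν : Measure (Ed d)) (r α : ℝ) : ℝ :=
  limsup (fun n : ℕ => logPlus (Ncount d ν α r n) / ((n : ℝ) * Real.log 2)) atTop

/-- `F̲_{ν,r}(α)`. -/
def FLowerAt (d : ℕ) (ν : Measure (Ed d)) (r α : ℝ) : ℝ :=
  liminf (fun n : ℕ => logPlus (Ncount d ν α r n) / ((n : ℝ) * Real.log 2)) atTop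

/-- The upper optimized coarse multifractal dimension `F̄_r = sup_{α>0} F̄_{ν,r}(α)/α`. -/
def FUpper (d : ℕ) (ν : Measure (Ed d)) (r : ℝ) : ℝ :=
  sSup {v : ℝ | ∃ α : ℝ, 0 < α ∧ v = FUpperAt d ν r α / α}

/-- The lower optimized coarse multifractal dimension `F̲_r = sup_{α>0} F̲_{ν,r}(α)/α`. -/
def FLower (d : ℕ) (ν : Measure (Ed d)) (r : ℝ) : ℝ :=
  sSup {v : ℝ | ∃ α : ℝ, 0 < α ∧ v = FLowerAt d ν r α / α}

/-- A finite partition of `𝒬` by dyadic cubes. -/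
def IsDyadicPartition (d : ℕ) (P : Finset (Set (Ed d))) : Prop :=
  (∀ Q ∈ P, Q ∈ Ddy d) ∧ (P : Set (Set (Ed d))).PairwiseDisjoint id ∧
    ⋃₀ (P : Set (Set (Ed d))) = Qcube d

/-- `M_{ν,r}(x) = inf{card P : P ∈ Π, max_{Q ∈ P} J_{ν,r}(Q) < 1/x}`. -/
def Mx (d : ℕ) (ν : Measure (Ed d)) (r x : ℝ) : ℕ :=
  sInf {m : ℕ | ∃ P : Finset (Set (Ed d)), IsDyadicPartition d P ∧
    (∀ Q ∈ P, Jf d ν r Q < 1 / x) ∧ P.card = m}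

/-- The upper `(ν,r)`-partition entropy `h̄_{ν,r}`. -/
def hUpper (d : ℕ) (ν : Measure (Ed d)) (r : ℝ) : ℝ :=
  limsup (fun x : ℝ => Real.log (Mx d ν r x) / Real.log x) atTop

/-- The lower `(ν,r)`-partition entropy `h̲_{ν,r}`. -/
def hLowerBase (d : ℕ) (ν : Measure (Ed d)) (r : ℝ) : ℝ :=
  liminf (fun x : ℝ => Real.log (Mx d ν r x) / Real.log x) atTop

/-- `h̲_r = lim_{ε ↓ 0} h̲_{ν,r-ε}`. -/
def hLowerLim (d : ℕ) (ν : Measure (Ed d)) (r : ℝ) : ℝ :=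
  limUnder (𝓝[>] (0:ℝ)) (fun ε => hLowerBase d ν (r - ε))

/-- The value `(∫ d(x,A)^r dν)^{1/r}` (resp. `exp ∫ log d(x,A) dν` for `r = 0`) of the
quantization functional at the codebook `A`; computed in `[0,∞]` so that for `r < 0` a
non-integrable integrand gives the value `0`. -/
def eVal (d : ℕ) (ν : Measure (Ed d)) (A : Finset (Ed d)) (r : ℝ) : ℝ :=
  if r = 0 then Real.exp (∫ x, Real.log (infDist x (A : Set (Ed d))) ∂ν)
  else ((∫⁻ x, ENNReal.ofReal (infDist x (A : Set (Ed d))) ^ r ∂ν) ^ (1 / r)).toReal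

/-- The `n`-th quantization error `e_{n,r}(ν)` of order `r`. -/
def qerr (d : ℕ) (ν : Measure (Ed d)) (n : ℕ) (r : ℝ) : ℝ :=
  sInf {e : ℝ | ∃ A : Finset (Ed d), A.Nonempty ∧ A.card ≤ n ∧ e = eVal d ν A r}

/-- The upper quantization dimension `D̄_r(ν)` (with the convention `1/log 0 = 0`,
realized by `Real.log 0 = 0`). -/
def upperD (d : ℕ) (ν : Measure (Ed d)) (r : ℝ) : ℝ :=
  limsup (fun n : ℕ => Real.log n / (- Real.log (qerr d ν n r))) atTop

/-- The lower quantization dimension `D̲_r(ν)`. -/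
def lowerD (d : ℕ) (ν : Measure (Ed d)) (r : ℝ) : ℝ :=
  liminf (fun n : ℕ => Real.log n / (- Real.log (qerr d ν n r))) atTop

/-- The sequence `n^{1/κ} e_{n,r}(ν)`, viewed in `[0,∞]`. -/
def qcoefSeq (d : ℕ) (ν : Measure (Ed d)) (κ r : ℝ) (n : ℕ) : ℝ≥0∞ :=
  ENNReal.ofReal ((n : ℝ) ^ (1 / κ) * qerr d ν n r)

/-- The `κ`-dimensional quantization coefficient of order `r` exists and equals `c`. -/
def HasQCoef (d : ℕ) (ν : Measure (Ed d)) (κ r : ℝ) (c : ℝ≥0∞) : Prop :=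
  Tendsto (qcoefSeq d ν κ r) atTop (𝓝 c)

/-- The `κ`-dimensional quantization coefficient of order `r` (junk value if the limit
does not exist). -/
def qcoef (d : ℕ) (ν : Measure (Ed d)) (κ r : ℝ) : ℝ≥0∞ :=
  limUnder atTop (qcoefSeq d ν κ r)

/-- `s_h = sup{s > 0 : ‖h‖_{L^s(Λ)} < ∞}`. -/
def sCrit (d : ℕ) (h : Ed d → ℝ≥0∞) : ℝ :=
  sSup {s : ℝ | 0 < s ∧ ∫⁻ x in Qcube d, h x ^ s < ⊤}

/-- `Φ_r(h)`. -/
def Phi (d : ℕ) (r : ℝ) (h : Ed d → ℝ≥0∞) : ℝ :=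
  if r ≤ -(d:ℝ) then 0
  else if r = 0 then
    Real.exp (-(1/(d:ℝ)) * ∫ x in Qcube d, (h x).toReal * Real.log (h x).toReal)
  else ((∫⁻ x in Qcube d, h x ^ ((d:ℝ)/((d:ℝ)+r))) ^ (((d:ℝ)+r)/(d:ℝ) * (1/r))).toReal

/-- `a_ν = sup{q_r : r ∈ (-dim_∞(ν),0)}`, computed in `[0,∞]`. -/
def aNu (d : ℕ) (ν : Measure (Ed d)) : ℝ≥0∞ :=
  ⨆ r ∈ Set.Ioo (-(dimInfty d ν)) (0:ℝ), ENNReal.ofReal (qrCrit d ν r)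

/-- `ν` is multifractal-regular at `r`. -/
def MFregular (d : ℕ) (ν : Measure (Ed d)) (r : ℝ) : Prop :=
  FLower d ν r = FUpper d ν r

/-- `ν` is partition function regular at `r`. -/
def PFregular (d : ℕ) (ν : Measure (Ed d)) (r : ℝ) : Prop :=
  (∃ ε > 0, ∀ q ∈ Set.Ioo (qrCrit d ν r - ε) (qrCrit d ν r),
      Tendsto (tauN d ν r q) atTop (𝓝 (tauJ d ν r q))) ∨
  (Tendsto (tauN d ν r (qrCrit d ν r)) atTop (𝓝 (tauJ d ν r (qrCrit d ν r))) ∧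
      DifferentiableAt ℝ (tauJ d ν r) (qrCrit d ν r))

/-- Distance between two sets. -/
def setDist (d : ℕ) (S T : Set (Ed d)) : ℝ :=
  sInf {v : ℝ | ∃ x ∈ S, ∃ y ∈ T, v = dist x y}

/-- The `2^{-n+1}`-parallel set `B_n(Q̃)` of a dyadic cube `Q̃`. -/
def parSet (d n : ℕ) (Qt : Set (Ed d)) : Set (Ed d) :=
  ⋃ Q ∈ {Q ∈ DnAll d (n-1) | (closure Qt ∩ closure Q).Nonempty}, Q

/-- `V_{n,r}(μ) = sup_A ∫ d(x,A)^r dμ` for `r < 0`, computed in `[0,∞]`. -/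
def Vnr (d : ℕ) (μ : Measure (Ed d)) (n : ℕ) (r : ℝ) : ℝ≥0∞ :=
  ⨆ (A : Finset (Ed d)) (_ : A.Nonempty ∧ A.card ≤ n),
    ∫⁻ x, ENNReal.ofReal (infDist x (A : Set (Ed d))) ^ r ∂μ


/-! By the Besicovitch differentiation theorem, a nonzero absolutely continuous part yields a
point `a` and `c > 0` with `ν (B(a, r)) ≥ c r^d` for all small `r`. If `ρ = ‖x - a‖^{-d} ν` were
finite, continuity from above would give `ρ {a} = lim ρ (B(a, r)) ≥ c · vol (B(0, 1)) > 0`; but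
the density is infinite at `a`, so then `ρ {a} = ∞`. Hence `∫ d(x, {a})^{-d} dν = ∞`, and the
one-point codebook `{a}` has error `0` of order `-d`. -/

lemma exists_eventually_mul_measure_closedBall_le {β : Type*} [MetricSpace β]
    [MeasurableSpace β] [BorelSpace β] [SecondCountableTopology β] [HasBesicovitchCovering β]
    (μ ν : Measure β) [IsLocallyFiniteMeasure μ] [IsLocallyFiniteMeasure ν]
    (hac : μ.withDensity (ν.rnDeriv μ) ≠ 0) :
    ∃ a : β, ∃ c ≠ 0, ∀ᶠ r in 𝓝[>] 0, c * μ (closedBall a r) ≤ ν (closedBall a r) := by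
  have hpos : ∃ᶠ x in ae μ, ν.rnDeriv μ x ≠ 0 := fun h =>
    hac ((withDensity_eq_zero_iff (Measure.measurable_rnDeriv ν μ).aemeasurable).2
      (h.mono fun _ hx => not_not.1 hx))
  obtain ⟨a, hlim, ha⟩ := ((Besicovitch.ae_tendsto_rnDeriv ν μ).and_frequently hpos).exists
  obtain ⟨c, hc, hcL⟩ := exists_between (pos_iff_ne_zero.2 ha)
  refine ⟨a, c, hc.ne', ?_⟩
  filter_upwards [hlim.eventually (lt_mem_nhds hcL)] with r hr
  exact ENNReal.mul_le_of_le_div hr.le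

lemma rpow_neg_mul_measure_closedBall_le_setLIntegral {X : Type*} [PseudoMetricSpace X]
    [MeasurableSpace X] [OpensMeasurableSpace X] (ν : Measure X) (a : X) {p : ℝ} (hp : 0 ≤ p)
    (r : ℝ) :
    ENNReal.ofReal r ^ (-p) * ν (closedBall a r) ≤
      ∫⁻ x in closedBall a r, ENNReal.ofReal (dist x a) ^ (-p) ∂ν := by
  rw [← setLIntegral_const]
  refine setLIntegral_mono' measurableSet_closedBall fun x hx => ?_
  simp only [ENNReal.rpow_neg]
  gcongr
  exact mem_closedBall.1 hx

section AddHaar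

variable {E : Type*} [NormedAddCommGroup E] [NormedSpace ℝ E] [FiniteDimensional ℝ E]
  [MeasurableSpace E] [BorelSpace E] (μ : Measure E) [μ.IsAddHaarMeasure]

lemma rpow_neg_finrank_mul_addHaar_closedBall (a : E) {r : ℝ} (hr : 0 < r) :
    ENNReal.ofReal r ^ (-(Module.finrank ℝ E : ℝ)) * μ (closedBall a r) =
      μ (closedBall 0 1) := by
  rw [Measure.addHaar_closedBall' μ a hr.le, ← mul_assoc, ENNReal.rpow_neg,
    ENNReal.rpow_natCast, ← ENNReal.ofReal_pow hr.le,
    ENNReal.inv_mul_cancel (by positivity) ENNReal.ofReal_ne_top, one_mul]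

lemma lintegral_dist_rpow_neg_finrank_eq_top [Nontrivial E] (ν : Measure E) (a : E)
    {c : ℝ≥0∞} (hc : c ≠ 0)
    (hball : ∀ᶠ r in 𝓝[>] 0, c * μ (closedBall a r) ≤ ν (closedBall a r)) :
    ∫⁻ x, ENNReal.ofReal (dist x a) ^ (-(Module.finrank ℝ E : ℝ)) ∂ν = ∞ := by
  set g : E → ℝ≥0∞ := fun x => ENNReal.ofReal (dist x a) ^ (-(Module.finrank ℝ E : ℝ))
  by_contra hfin
  set ρ := ν.withDensity g
  have : IsFiniteMeasure ρ := isFiniteMeasure_withDensity hfin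
  have hbound : ∀ᶠ r in 𝓝[>] 0, c * μ (closedBall 0 1) ≤ ρ (closedBall a r) := by
    filter_upwards [hball, self_mem_nhdsWithin] with r hr hr0
    calc c * μ (closedBall 0 1)
        = ENNReal.ofReal r ^ (-(Module.finrank ℝ E : ℝ)) * (c * μ (closedBall a r)) := by
          rw [← rpow_neg_finrank_mul_addHaar_closedBall μ a hr0]; ring
      _ ≤ ENNReal.ofReal r ^ (-(Module.finrank ℝ E : ℝ)) * ν (closedBall a r) := by gcongr
      _ ≤ ∫⁻ x in closedBall a r, g x ∂ν :=
          rpow_neg_mul_measure_closedBall_le_setLIntegral ν a (Nat.cast_nonneg _) r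
      _ = ρ (closedBall a r) := (withDensity_apply g measurableSet_closedBall).symm
  have hlim : Tendsto (fun r => ρ (closedBall a r)) (𝓝[>] 0) (𝓝 (ρ {a})) := by
    refine ((tendsto_measure_cthickening_of_isClosed ⟨1, one_pos, measure_ne_top ρ _⟩
      isClosed_singleton).mono_left nhdsWithin_le_nhds).congr' ?_
    filter_upwards [self_mem_nhdsWithin] with r hr
    rw [cthickening_singleton a hr.le]
  have hatom_pos : ρ {a} ≠ 0 :=
    ((ENNReal.mul_pos hc (measure_closedBall_pos μ 0 one_pos).ne').trans_le
      (ge_of_tendsto hlim hbound)).ne'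
  have hga : g a = ∞ := by
    simp only [g, dist_self, ENNReal.ofReal_zero]
    exact ENNReal.zero_rpow_of_neg (neg_neg_of_pos (Nat.cast_pos.2 Module.finrank_pos))
  have hatom : ρ {a} = ∞ * ν {a} := by
    rw [withDensity_apply g (measurableSet_singleton a), lintegral_singleton, hga]
  rw [hatom] at hatom_pos
  exact measure_ne_top ρ {a} (hatom.trans (ENNReal.top_mul (right_ne_zero_of_mul hatom_pos)))

end AddHaar

lemma eVal_nonneg (d : ℕ) (ν : Measure (Ed d)) (A : Finset (Ed d)) (r : ℝ) :
    0 ≤ eVal d ν A r := by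
  unfold eVal
  split_ifs
  · exact (Real.exp_pos _).le
  · exact ENNReal.toReal_nonneg

lemma eVal_eq_zero_of_lintegral_eq_top {d : ℕ} {ν : Measure (Ed d)} {A : Finset (Ed d)}
    {r : ℝ} (hr : r < 0)
    (h : ∫⁻ x, ENNReal.ofReal (infDist x (A : Set (Ed d))) ^ r ∂ν = ∞) :
    eVal d ν A r = 0 := by
  rw [eVal, if_neg hr.ne, h, ENNReal.top_rpow_of_neg (one_div_neg.2 hr), ENNReal.toReal_zero]

lemma qerr_zero (d : ℕ) (ν : Measure (Ed d)) (r : ℝ) : qerr d ν 0 r = 0 := by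
  have hempty : {e : ℝ | ∃ A : Finset (Ed d), A.Nonempty ∧ A.card ≤ 0 ∧ e = eVal d ν A r} = ∅ :=
    eq_empty_of_forall_notMem fun _ ⟨A, hA, hcard, _⟩ => hA.card_pos.ne' (Nat.le_zero.1 hcard)
  rw [qerr, hempty, Real.sInf_empty]

lemma qerr_eq_zero_of_eVal_eq_zero {d n : ℕ} {ν : Measure (Ed d)} {r : ℝ} {A : Finset (Ed d)}
    (hA : A.Nonempty) (hcard : A.card ≤ n) (h : eVal d ν A r = 0) : qerr d ν n r = 0 := by
  have hmem : (0 : ℝ) ∈ {e : ℝ | ∃ A : Finset (Ed d), A.Nonempty ∧ A.card ≤ n ∧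
      e = eVal d ν A r} := ⟨A, hA, hcard, h.symm⟩
  have hlb : ∀ e ∈ {e : ℝ | ∃ A : Finset (Ed d), A.Nonempty ∧ A.card ≤ n ∧
      e = eVal d ν A r}, 0 ≤ e := by
    rintro e ⟨B, -, -, rfl⟩
    exact eVal_nonneg d ν B r
  exact le_antisymm (csInf_le ⟨0, hlb⟩ hmem) (le_csInf ⟨0, hmem⟩ hlb)

theorem quantization_error_neg_d_eq_zero_of_ac_part_ne_zero_general
    (d : ℕ) (hd : 0 < d) (ν : Measure (Ed d)) [IsProbabilityMeasure ν]
    (hac : volume.withDensity (ν.rnDeriv volume) ≠ 0) :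
    ∀ n : ℕ, qerr d ν n (-(d:ℝ)) = 0 := by
  intro n
  rcases Nat.eq_zero_or_pos n with rfl | hn
  · exact qerr_zero d ν _
  have : Nonempty (Fin d) := ⟨⟨0, hd⟩⟩
  obtain ⟨a, c, hc, hball⟩ := exists_eventually_mul_measure_closedBall_le volume ν hac
  have htop := lintegral_dist_rpow_neg_finrank_eq_top volume ν a hc hball
  rw [Module.finrank_fin_fun] at htop
  refine qerr_eq_zero_of_eVal_eq_zero (Finset.singleton_nonempty a) hn
    (eVal_eq_zero_of_lintegral_eq_top (by simpa using hd) ?_)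
  simpa only [Finset.coe_singleton, infDist_singleton] using htop

/-- If the Lebesgue decomposition of a compactly supported Borel probability
measure `ν` on `ℝ^d` has a nonzero absolutely continuous part with respect to Lebesgue
measure, then `e_{n,-d}(ν) = 0` for every `n`. -/
theorem quantization_error_neg_d_eq_zero_of_ac_part_ne_zero
    (d : ℕ) (hd : 0 < d) (ν : Measure (Ed d)) [IsProbabilityMeasure ν]
    (K : Set (Ed d)) (hK : IsCompact K) (hKsupp : ν Kᶜ = 0)
    (hac : volume.withDensity (ν.rnDeriv volume) ≠ 0) :
    ∀ n : ℕ, qerr d ν n (-(d:ℝ)) = 0 :=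
  quantization_error_neg_d_eq_zero_of_ac_part_ne_zero_general d hd ν hac
end
end

section
/- Let Q̃ be a half-open dyadic cube in ℝ^d, A ⊂ ℝ^d a finite set, and n an integer with n > |log₂|Q̃||. Then card{Q ∈ 𝒟_n(Q̃) : d(Q,A) ≥ |Q| and for all Q' ∈ 𝒟_{n−1}(Q̃) with Q' ⊃ Q one has d(Q',A) < |Q'|} ≤ 6^d · card(A ∩ B_n(Q̃)). -/
open MeasureTheory Filter Set Metric
open scoped ENNReal NNReal Topology Classical

noncomputable section

/-!
The parent `Q'` of a counted cube `Q` lies within distance `|Q'|` of some `a ∈ A`. Such an `a`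
lies in a cube of generation `n - 1` whose closure touches `closure Q' ⊆ closure Q̃`, so
`a ∈ B_n(Q̃)`; and for a fixed `a` at most `3 ^ d` cubes of generation `n - 1` come that close,
each with `2 ^ d` children.
-/

def dyadicIoc (p : ℕ) (j : ℤ) : Set ℝ := Ioc (j / 2 ^ p) ((j + 1) / 2 ^ p)

lemma dyadicCube_eq_pi (d p : ℕ) (k : Fin d → ℤ) :
    dyadicCube d p k = univ.pi fun i => dyadicIoc p (k i) := by
  ext x
  simp [dyadicCube, dyadicIoc]

lemma mem_dyadicIoc_iff {p : ℕ} {j : ℤ} {x : ℝ} :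
    x ∈ dyadicIoc p j ↔ (j : ℝ) < x * 2 ^ p ∧ x * 2 ^ p ≤ j + 1 := by
  rw [dyadicIoc, mem_Ioc, div_lt_iff₀ (by positivity), le_div_iff₀ (by positivity)]

lemma mem_dyadicIoc_ceil (p : ℕ) (x : ℝ) : x ∈ dyadicIoc p (⌈x * 2 ^ p⌉ - 1) := by
  rw [mem_dyadicIoc_iff]
  push_cast
  exact ⟨by linarith [Int.ceil_lt_add_one (x * 2 ^ p)], by linarith [Int.le_ceil (x * 2 ^ p)]⟩

lemma dyadicIoc_endpoints_lt (p : ℕ) (j : ℤ) : (j : ℝ) / 2 ^ p < (j + 1) / 2 ^ p :=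
  div_lt_div_of_pos_right (lt_add_one _) (by positivity)

lemma dyadicIoc_subset_parent (p : ℕ) (j : ℤ) : dyadicIoc (p + 1) j ⊆ dyadicIoc p (j / 2) := by
  intro y hy
  rw [mem_dyadicIoc_iff, pow_succ, ← mul_assoc] at hy
  rw [mem_dyadicIoc_iff]
  have hlo : ((2 * (j / 2) : ℤ) : ℝ) ≤ j := by exact_mod_cast Int.mul_ediv_self_le two_ne_zero
  have hhi : (j : ℝ) + 1 ≤ ((2 * (j / 2) + 2 : ℤ) : ℝ) := by exact_mod_cast (by omega)
  push_cast at hlo hhi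
  constructor <;> linarith

lemma dyadicIoc_subset_of_inter_nonempty {m p : ℕ} {j j₀ : ℤ} (hmp : m ≤ p)
    (h : (dyadicIoc p j ∩ dyadicIoc m j₀).Nonempty) : dyadicIoc p j ⊆ dyadicIoc m j₀ := by
  obtain ⟨x, hx, hx₀⟩ := h
  obtain ⟨q, rfl⟩ := Nat.exists_eq_add_of_le hmp
  have hscale : ∀ y : ℝ, y * 2 ^ (m + q) = y * 2 ^ m * 2 ^ q := fun y => by ring
  have hN : (0 : ℝ) < 2 ^ q := by positivity
  rw [mem_dyadicIoc_iff, hscale] at hx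
  rw [mem_dyadicIoc_iff] at hx₀
  have hlo : j₀ * 2 ^ q ≤ j := by
    have : (j₀ : ℝ) * 2 ^ q < j + 1 := by linarith [mul_lt_mul_of_pos_right hx₀.1 hN]
    exact Int.lt_add_one_iff.mp (by exact_mod_cast this)
  have hhi : j + 1 ≤ (j₀ + 1) * 2 ^ q := by
    have : (j : ℝ) < (j₀ + 1) * 2 ^ q := by linarith [mul_le_mul_of_nonneg_right hx₀.2 hN.le]
    exact_mod_cast this
  have hlo' : (j₀ : ℝ) * 2 ^ q ≤ j := by exact_mod_cast hlo
  have hhi' : (j : ℝ) + 1 ≤ (j₀ + 1) * 2 ^ q := by exact_mod_cast hhi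
  intro y hy
  rw [mem_dyadicIoc_iff, hscale] at hy
  rw [mem_dyadicIoc_iff]
  exact ⟨lt_of_mul_lt_mul_right (by linarith) hN.le, le_of_mul_le_mul_right (by linarith) hN⟩

lemma closure_dyadicIoc_inter_nonempty {p : ℕ} {j j' : ℤ} (h : |j - j'| ≤ 1) :
    (closure (dyadicIoc p j) ∩ closure (dyadicIoc p j')).Nonempty := by
  have hIcc : ∀ i : ℤ, closure (dyadicIoc p i) = Icc ((i : ℝ) / 2 ^ p) ((i + 1) / 2 ^ p) :=
    fun i => closure_Ioc (dyadicIoc_endpoints_lt p i).ne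
  rw [abs_le] at h
  refine ⟨((max j j' : ℤ) : ℝ) / 2 ^ p, ?_, ?_⟩ <;> rw [hIcc] <;>
    refine ⟨div_le_div_of_nonneg_right ?_ (by positivity),
      div_le_div_of_nonneg_right ?_ (by positivity)⟩ <;>
    exact_mod_cast (by omega)

lemma dyadicCube_nonempty (d p : ℕ) (k : Fin d → ℤ) : (dyadicCube d p k).Nonempty := by
  rw [dyadicCube_eq_pi]
  exact univ_pi_nonempty_iff.2 fun i => nonempty_Ioc.2 (dyadicIoc_endpoints_lt p (k i))

lemma mem_dyadicCube_ceil {d : ℕ} (p : ℕ) (x : Ed d) :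
    x ∈ dyadicCube d p (fun i => ⌈x i * 2 ^ p⌉ - 1) :=
  fun i => mem_dyadicIoc_ceil p (x i)

lemma dyadicCube_subset_parent (d p : ℕ) (k : Fin d → ℤ) :
    dyadicCube d (p + 1) k ⊆ dyadicCube d p (fun i => k i / 2) :=
  fun _ hx i => dyadicIoc_subset_parent p (k i) (hx i)

lemma dyadicCube_subset_of_inter_nonempty {d m p : ℕ} {k k₀ : Fin d → ℤ} (hmp : m ≤ p)
    (h : (dyadicCube d p k ∩ dyadicCube d m k₀).Nonempty) :
    dyadicCube d p k ⊆ dyadicCube d m k₀ := by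
  obtain ⟨x, hx, hx₀⟩ := h
  exact fun y hy i => dyadicIoc_subset_of_inter_nonempty hmp ⟨x i, hx i, hx₀ i⟩ (hy i)

lemma closure_dyadicCube_inter_nonempty {d p : ℕ} {k k' : Fin d → ℤ}
    (h : ∀ i, |k i - k' i| ≤ 1) :
    (closure (dyadicCube d p k) ∩ closure (dyadicCube d p k')).Nonempty := by
  rw [dyadicCube_eq_pi, dyadicCube_eq_pi, closure_pi_set, closure_pi_set, ← pi_inter_distrib,
    univ_pi_nonempty_iff]
  exact fun i => closure_dyadicIoc_inter_nonempty (h i)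

lemma index_mem_Icc_of_dist_lt {p : ℕ} {j : ℤ} {x a : ℝ} (hx : x ∈ dyadicIoc p j)
    (hxa : dist x a < (2 ^ p)⁻¹) : j ∈ Icc (⌈a * 2 ^ p⌉ - 2) ⌈a * 2 ^ p⌉ := by
  rw [mem_dyadicIoc_iff] at hx
  have hscaled : |x * 2 ^ p - a * 2 ^ p| < 1 := by
    rw [← sub_mul, abs_mul, abs_of_pos (by positivity : (0 : ℝ) < 2 ^ p)]
    rwa [Real.dist_eq, ← one_div, lt_div_iff₀ (by positivity)] at hxa
  rw [abs_sub_lt_iff] at hscaled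
  have hc₁ := Int.le_ceil (a * 2 ^ p)
  have hc₂ := Int.ceil_lt_add_one (a * 2 ^ p)
  constructor
  · have : ((⌈a * 2 ^ p⌉ - 2 : ℤ) : ℝ) < j + 1 := by push_cast; linarith
    exact Int.lt_add_one_iff.mp (by exact_mod_cast this)
  · have : (j : ℝ) < ⌈a * 2 ^ p⌉ + 1 := by linarith
    exact Int.lt_add_one_iff.mp (by exact_mod_cast this)

/-- Three parents per coordinate come within `2 ^ (-p)` of `a`, each with two children. -/
def nearIndices {d : ℕ} (p : ℕ) (a : Ed d) : Finset (Fin d → ℤ) :=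
  Fintype.piFinset fun i => Finset.Icc (2 * ⌈a i * 2 ^ p⌉ - 4) (2 * ⌈a i * 2 ^ p⌉ + 1)

lemma card_nearIndices {d : ℕ} (p : ℕ) (a : Ed d) : (nearIndices p a).card = 6 ^ d := by
  have hsix : ∀ c : ℤ, (2 * c + 1 + 1 - (2 * c - 4)).toNat = 6 := fun c => by omega
  simp [nearIndices, Int.card_Icc, hsix]

lemma mem_nearIndices {d p : ℕ} {k : Fin d → ℤ} {x a : Ed d}
    (hx : x ∈ dyadicCube d p fun i => k i / 2) (hxa : dist x a < (2 ^ p)⁻¹) :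
    k ∈ nearIndices p a := by
  refine Fintype.mem_piFinset.2 fun i => Finset.mem_Icc.2 ?_
  obtain ⟨hlo, hhi⟩ := index_mem_Icc_of_dist_lt (hx i) ((dist_le_pi_dist x a i).trans_lt hxa)
  dsimp only at hlo hhi
  omega

lemma mem_parSet_of_dist_lt {d m p : ℕ} {j k₀ : Fin d → ℤ} {x a : Ed d}
    (hsub : dyadicCube d p j ⊆ dyadicCube d m k₀) (hx : x ∈ dyadicCube d p j)
    (hxa : dist x a < (2 ^ p)⁻¹) : a ∈ parSet d (p + 1) (dyadicCube d m k₀) := by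
  have hadj : ∀ i, |j i - (⌈a i * 2 ^ p⌉ - 1)| ≤ 1 := fun i => by
    obtain ⟨hlo, hhi⟩ := index_mem_Icc_of_dist_lt (hx i) ((dist_le_pi_dist x a i).trans_lt hxa)
    rw [abs_le]
    omega
  obtain ⟨y, hyj, hya⟩ := closure_dyadicCube_inter_nonempty hadj
  exact mem_biUnion ⟨⟨_, rfl⟩, y, closure_mono hsub hyj, hya⟩ (mem_dyadicCube_ceil p a)

lemma nonempty_of_setDist_pos {d : ℕ} {S T : Set (Ed d)} (h : 0 < setDist d S T) :
    T.Nonempty := by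
  rw [nonempty_iff_ne_empty]
  rintro rfl
  simp [setDist] at h

lemma exists_dist_lt_of_setDist_lt {d : ℕ} {S T : Set (Ed d)} {r : ℝ} (hS : S.Nonempty)
    (hT : T.Nonempty) (h : setDist d S T < r) : ∃ x ∈ S, ∃ y ∈ T, dist x y < r := by
  obtain ⟨x₀, hx₀⟩ := hS
  obtain ⟨y₀, hy₀⟩ := hT
  have hbdd : BddBelow {v : ℝ | ∃ x ∈ S, ∃ y ∈ T, v = dist x y} :=
    ⟨0, by rintro _ ⟨x, -, y, -, rfl⟩; exact dist_nonneg⟩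
  obtain ⟨_, ⟨x, hx, y, hy, rfl⟩, hlt⟩ := (csInf_lt_iff hbdd ⟨_, x₀, hx₀, y₀, hy₀, rfl⟩).1 h
  exact ⟨x, hx, y, hy, hlt⟩

lemma exists_nearIndices_of_setDist_parent_lt {d m p : ℕ} {k₀ : Fin d → ℤ} {T : Set (Ed d)} {Q : Set (Ed d)}
    (hmp : m ≤ p) (hQ : Q ∈ DnAll d (p + 1)) (hQsub : Q ⊆ dyadicCube d m k₀) (hT : T.Nonempty)
    (hparent : ∀ Q' ∈ DnAll d p, Q' ⊆ dyadicCube d m k₀ → Q ⊆ Q' → setDist d Q' T < (2 ^ p)⁻¹) :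
    ∃ a ∈ T ∩ parSet d (p + 1) (dyadicCube d m k₀),
      ∃ k ∈ nearIndices p a, Q = dyadicCube d (p + 1) k := by
  obtain ⟨k, rfl⟩ := hQ
  have hQP := dyadicCube_subset_parent d p k
  obtain ⟨z, hz⟩ := dyadicCube_nonempty d (p + 1) k
  have hPsub := dyadicCube_subset_of_inter_nonempty hmp ⟨z, hQP hz, hQsub hz⟩
  obtain ⟨x, hxP, a, ha, hxa⟩ := exists_dist_lt_of_setDist_lt (dyadicCube_nonempty d p _) hT
    (hparent _ ⟨_, rfl⟩ hPsub hQP)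
  exact ⟨a, ⟨ha, mem_parSet_of_dist_lt hPsub hxP hxa⟩, k, mem_nearIndices hxP hxa, rfl⟩

theorem card_bad_cubes_le_general
    (d : ℕ) (m : ℕ) (k0 : Fin d → ℤ) (A : Finset (Ed d))
    (n : ℕ) (hn : m < n) :
    Set.ncard {Q : Set (Ed d) | Q ∈ DnAll d n ∧ Q ⊆ dyadicCube d m k0 ∧
        (2:ℝ) ^ (-(n:ℝ)) ≤ setDist d Q (A : Set (Ed d)) ∧
        (∀ Q' ∈ DnAll d (n-1), Q' ⊆ dyadicCube d m k0 → Q ⊆ Q' →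
          setDist d Q' (A : Set (Ed d)) < (2:ℝ) ^ (-((n:ℝ)-1)))} ≤
      6 ^ d * ((A : Set (Ed d)) ∩ parSet d n (dyadicCube d m k0)).ncard := by
  obtain ⟨p, rfl⟩ : ∃ p, n = p + 1 := ⟨n - 1, by omega⟩
  have hradius : (2 : ℝ) ^ (-((↑(p + 1) : ℝ) - 1)) = (2 ^ p)⁻¹ := by
    rw [Nat.cast_succ, add_sub_cancel_right, Real.rpow_neg zero_le_two, Real.rpow_natCast]
  set F := A.filter (· ∈ parSet d (p + 1) (dyadicCube d m k0))
  calc _ ≤ (F.biUnion fun a => (nearIndices p a).image (dyadicCube d (p + 1))).card := by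
        refine (Set.ncard_le_ncard ?_ (Finset.finite_toSet _)).trans_eq (Set.ncard_coe_finset _)
        rintro Q ⟨hQ, hQsub, hdist, hparent⟩
        have hA := nonempty_of_setDist_pos ((Real.rpow_pos_of_pos two_pos _).trans_le hdist)
        rw [hradius] at hparent
        obtain ⟨a, ⟨ha, haB⟩, k, hk, rfl⟩ :=
          exists_nearIndices_of_setDist_parent_lt (by omega) hQ hQsub hA hparent
        simp only [Finset.coe_biUnion, Finset.coe_image, mem_iUnion, mem_image, Finset.mem_coe]
        exact ⟨a, Finset.mem_filter.2 ⟨ha, haB⟩, k, hk, rfl⟩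
    _ ≤ ∑ a ∈ F, 6 ^ d := Finset.card_biUnion_le.trans <| Finset.sum_le_sum fun a _ =>
        Finset.card_image_le.trans_eq (card_nearIndices p a)
    _ = 6 ^ d * ((A : Set (Ed d)) ∩ parSet d (p + 1) (dyadicCube d m k0)).ncard := by
        rw [Finset.sum_const, smul_eq_mul, mul_comm, ← Set.ncard_coe_finset, Finset.coe_filter]
        rfl

/-- combinatorial covering lemma. For a dyadic cube `Q̃` of generation `m`,
a finite set `A ⊆ ℝ^d` and `n > m`, the number of cubes `Q ∈ 𝒟_n(Q̃)` with
`d(Q,A) ≥ |Q|` whose dyadic parent `Q' ∈ 𝒟_{n-1}(Q̃)` satisfies `d(Q',A) < |Q'|`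
is at most `6^d · card(A ∩ B_n(Q̃))`. -/
theorem card_bad_cubes_le
    (d : ℕ) (hd : 0 < d) (m : ℕ) (k0 : Fin d → ℤ) (A : Finset (Ed d))
    (n : ℕ) (hn : m < n) :
    Set.ncard {Q : Set (Ed d) | Q ∈ DnAll d n ∧ Q ⊆ dyadicCube d m k0 ∧
        (2:ℝ) ^ (-(n:ℝ)) ≤ setDist d Q (A : Set (Ed d)) ∧
        (∀ Q' ∈ DnAll d (n-1), Q' ⊆ dyadicCube d m k0 → Q ⊆ Q' →
          setDist d Q' (A : Set (Ed d)) < (2:ℝ) ^ (-((n:ℝ)-1)))} ≤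
      6 ^ d * ((A : Set (Ed d)) ∩ parSet d n (dyadicCube d m k0)).ncard :=
  card_bad_cubes_le_general d m k0 A n hn
end
end
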